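/- arXiv:2205.03672 — 3 statements merged into one kernel-verified Lean document; each statement's English description precedes it below -/
import Mathlib

section
/- Let m, s ∈ (0,∞), u₀ ∈ ℝ, define S : [0,∞) → (0,∞) by S(t) = m·(m·sinh(m t) + s·cosh(m t))/(m·cosh(m t) + s·sinh(m t)) and U : [0,∞) → ℝ by U(t) = m·u₀/(m·cosh(m t) + s·sinh(m t)). Then U(0) = u₀ and for all t ≥ 0 it holds that U'(t) = −S(t)·U(t). -/
open Real

theorem hasDerivAt_mul_cosh_add_mul_sinh (a b m t : ℝ) :
    HasDerivAt (fun x => a * cosh (m * x) + b * sinh (m * x))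
      (m * (a * sinh (m * t) + b * cosh (m * t))) t := by
  have hmx : HasDerivAt (fun x => m * x) m t := by
    simpa using (hasDerivAt_id t).const_mul m
  have hcosh := ((hasDerivAt_cosh (m * t)).comp t hmx).const_mul a
  have hsinh := ((hasDerivAt_sinh (m * t)).comp t hmx).const_mul b
  exact (hcosh.add hsinh).congr_deriv (by ring)

theorem mul_cosh_add_mul_sinh_pos {a b x : ℝ} (ha : 0 < a) (hb : 0 ≤ b) (hx : 0 ≤ x) :
    0 < a * cosh x + b * sinh x := by
  have : 0 ≤ sinh x := sinh_nonneg_iff.mpr hx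
  have := cosh_pos x
  positivity

theorem HasDerivAt.const_div_neg_logDeriv_mul {f : ℝ → ℝ} {f' x : ℝ} (c : ℝ)
    (hf : HasDerivAt f f' x) (hx : f x ≠ 0) :
    HasDerivAt (fun y => c / f y) (-(f' / f x) * (c / f x)) x := by
  refine ((hasDerivAt_const x c).div hf hx).congr_deriv ?_
  field_simp
  ring

theorem stmt_1 (m s u₀ : ℝ) (hm : 0 < m) (hs : 0 < s)
    (S U : ℝ → ℝ)
    (hS : ∀ t : ℝ, S t =
      m * (m * Real.sinh (m * t) + s * Real.cosh (m * t)) /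
        (m * Real.cosh (m * t) + s * Real.sinh (m * t)))
    (hU : ∀ t : ℝ, U t = m * u₀ / (m * Real.cosh (m * t) + s * Real.sinh (m * t))) :
    U 0 = u₀ ∧
    (∀ t : ℝ, 0 ≤ t → HasDerivAt U (-(S t) * U t) t) := by
  refine ⟨by simp [hU, hm.ne'], fun t ht => ?_⟩
  have hpos := mul_cosh_add_mul_sinh_pos hm hs.le (mul_nonneg hm.le ht)
  -- `S` is the logarithmic derivative of the denominator of `U`.
  rw [hS, hU, show U = _ from funext hU]
  exact (hasDerivAt_mul_cosh_add_mul_sinh m s m t).const_div_neg_logDeriv_mul _ hpos.ne'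
end

section
/- Let d ∈ ℕ, let S_i : [0,∞) → (0,∞) and U_i : [0,∞) → ℝ for i = 1,…,d be continuously differentiable with S_i'(t) = m_i² − S_i(t)² and U_i'(t) = −S_i(t)·U_i(t) for positive reals m_1,…,m_d, and let u : [0,∞)×ℝ^d → ℝ be given by u(t,x) = ∏_{i=1}^d (2π S_i(t))^{−1/2} exp(−(x_i−U_i(t))²/(2 S_i(t))). Then for all t ≥ 0, x ∈ ℝ^d it holds that ∂u/∂t(t,x) = (u(t,x)/2)·∑_{i=1}^d [ m_i²·(((x_i−U_i(t))/S_i(t))² − 1/S_i(t)) + S_i(t) + U_i(t)² − x_i² ]. -/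
/-!
The i-th factor of `u` is the Gaussian density with mean `U i` and variance `S i`, whose
logarithmic time derivative is `(x - U) U' / S + ((x - U)² / S - 1) S' / (2 S)`. By the product
rule `∂ₜu` is `u` times the sum of these logarithmic derivatives, and substituting
`S' = m² - S²`, `U' = -S U` turns each of them into half the corresponding summand.
-/

open Real Finset

noncomputable def gaussianDensity (μ v x : ℝ) : ℝ :=
  (√(2 * π * v))⁻¹ * exp (-(x - μ) ^ 2 / (2 * v))

theorem HasDerivAt.finsetProd_of_eq_mul {𝕜 𝔸 ι : Type*} [NontriviallyNormedField 𝕜]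
    [NormedCommRing 𝔸] [NormedAlgebra 𝕜 𝔸] [DecidableEq ι] {s : Finset ι}
    {f : ι → 𝕜 → 𝔸} {g : ι → 𝔸} {x : 𝕜} (hf : ∀ i ∈ s, HasDerivAt (f i) (f i x * g i) x) :
    HasDerivAt (∏ i ∈ s, f i ·) ((∏ i ∈ s, f i x) * ∑ i ∈ s, g i) x := by
  convert HasDerivAt.fun_finsetProd hf using 1
  rw [mul_sum]
  refine sum_congr rfl fun i hi => ?_
  rw [smul_eq_mul, ← mul_assoc, prod_erase_mul s _ hi]

theorem hasDerivAt_gaussianDensity {μ v : ℝ → ℝ} {μ' v' t : ℝ} (x : ℝ)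
    (hμ : HasDerivAt μ μ' t) (hv : HasDerivAt v v' t) (hvt : 0 < v t) :
    HasDerivAt (fun τ => gaussianDensity (μ τ) (v τ) x)
      (gaussianDensity (μ t) (v t) x *
        ((x - μ t) * μ' / v t + (x - μ t) ^ 2 * v' / (2 * v t ^ 2) - v' / (2 * v t))) t := by
  have h2πv : 0 < 2 * π * v t := by positivity
  have hnorm : HasDerivAt (fun τ => (√(2 * π * v τ))⁻¹)
      (-(2 * π * v' / (2 * √(2 * π * v t))) / √(2 * π * v t) ^ 2) t :=
    ((hv.const_mul (2 * π)).sqrt h2πv.ne').inv (sqrt_pos.mpr h2πv).ne'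
  have hexpo : HasDerivAt (fun τ => -(x - μ τ) ^ 2 / (2 * v τ))
      ((-(2 * (x - μ t) ^ 1 * (0 - μ')) * (2 * v t) - (-(x - μ t) ^ 2) * (2 * v')) /
        (2 * v t) ^ 2) t :=
    ((((hasDerivAt_const t x).sub hμ).pow 2).neg).div (hv.const_mul 2) (by positivity)
  refine (hnorm.mul hexpo.exp).congr_deriv ?_
  unfold gaussianDensity
  rw [sq_sqrt h2πv.le]
  field_simp
  ring

theorem stmt_5_general (d : ℕ) (m : Fin d → ℝ)
    (S U : Fin d → ℝ → ℝ)
    (hSpos : ∀ i, ∀ t : ℝ, 0 ≤ t → 0 < S i t)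
    (hSderiv : ∀ i, ∀ t : ℝ, 0 ≤ t → HasDerivAt (S i) ((m i) ^ 2 - (S i t) ^ 2) t)
    (hUderiv : ∀ i, ∀ t : ℝ, 0 ≤ t → HasDerivAt (U i) (-(S i t) * U i t) t)
    (u : ℝ → (Fin d → ℝ) → ℝ)
    (hu : ∀ (t : ℝ) (x : Fin d → ℝ), u t x =
      ∏ i, (Real.sqrt (2 * Real.pi * S i t))⁻¹ *
        Real.exp (-(x i - U i t) ^ 2 / (2 * S i t))) :
    ∀ (t : ℝ), 0 ≤ t → ∀ (x : Fin d → ℝ),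
      HasDerivAt (fun τ => u τ x)
        (u t x / 2 * ∑ i, ((m i) ^ 2 * (((x i - U i t) / S i t) ^ 2 - 1 / S i t)
          + S i t + (U i t) ^ 2 - (x i) ^ 2)) t := by
  intro t ht x
  have hu_gauss : ∀ τ, u τ x = ∏ i, gaussianDensity (U i τ) (S i τ) (x i) := fun τ => hu τ x
  simp only [hu_gauss]
  rw [div_mul_eq_mul_div, mul_div_assoc, sum_div]
  refine HasDerivAt.finsetProd_of_eq_mul fun i _ => ?_
  refine (hasDerivAt_gaussianDensity (x i) (hUderiv i t ht) (hSderiv i t ht)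
    (hSpos i t ht)).congr_deriv ?_
  have hS := (hSpos i t ht).ne'
  field_simp
  ring

theorem stmt_5 (d : ℕ) (m : Fin d → ℝ) (hm : ∀ i, 0 < m i)
    (S U : Fin d → ℝ → ℝ)
    (hSpos : ∀ i, ∀ t : ℝ, 0 ≤ t → 0 < S i t)
    (hSderiv : ∀ i, ∀ t : ℝ, 0 ≤ t → HasDerivAt (S i) ((m i) ^ 2 - (S i t) ^ 2) t)
    (hUderiv : ∀ i, ∀ t : ℝ, 0 ≤ t → HasDerivAt (U i) (-(S i t) * U i t) t)
    (hSc : ∀ i, ContDiff ℝ 1 (S i)) (hUc : ∀ i, ContDiff ℝ 1 (U i))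
    (u : ℝ → (Fin d → ℝ) → ℝ)
    (hu : ∀ (t : ℝ) (x : Fin d → ℝ), u t x =
      ∏ i, (Real.sqrt (2 * Real.pi * S i t))⁻¹ *
        Real.exp (-(x i - U i t) ^ 2 / (2 * S i t))) :
    ∀ (t : ℝ), 0 ≤ t → ∀ (x : Fin d → ℝ),
      HasDerivAt (fun τ => u τ x)
        (u t x / 2 * ∑ i, ((m i) ^ 2 * (((x i - U i t) / S i t) ^ 2 - 1 / S i t)
          + S i t + (U i t) ^ 2 - (x i) ^ 2)) t :=
  stmt_5_general d m S U hSpos hSderiv hUderiv u hu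
end

section
/- Let m ∈ (0,∞) and s ∈ (0,∞), and define S(t) = m·(m sinh(m t) + s cosh(m t))/(m cosh(m t) + s sinh(m t)) for t ≥ 0. Then lim_{t→∞} S(t) = m, and S is monotone: if s < m then S is strictly increasing, if s > m then S is strictly decreasing, and if s = m then S is constant equal to m. -/
/-! Expanding `sinh` and `cosh` into exponentials gives, for `t ≥ 0`,
`S t = m + 2 m (s - m) / g t` with `g t = (m + s) e^{2 m t} + (m - s)`.
Since `g` is strictly increasing, tends to `∞` and `g 0 = 2 m > 0`, everything follows from the
sign of `s - m`. -/

open Real Set Filter Topology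

lemma mul_cosh_add_mul_sinh_eq (a b x : ℝ) :
    a * cosh x + b * sinh x = ((a + b) * exp (2 * x) + (a - b)) / (2 * exp x) := by
  rw [sinh_eq, cosh_eq, exp_neg, two_mul, exp_add]
  field_simp
  ring

lemma mul_sinh_add_mul_cosh_div_mul_cosh_add_mul_sinh (a b x : ℝ)
    (h : (a + b) * exp (2 * x) + (a - b) ≠ 0) :
    (a * sinh x + b * cosh x) / (a * cosh x + b * sinh x) =
      1 + 2 * (b - a) / ((a + b) * exp (2 * x) + (a - b)) := by
  rw [add_comm (a * sinh x), mul_cosh_add_mul_sinh_eq, mul_cosh_add_mul_sinh_eq,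
    div_div_div_cancel_right₀ (by positivity), one_add_div h]
  ring

lemma strictMono_mul_exp_add {p k : ℝ} (hp : 0 < p) (hk : 0 < k) (q : ℝ) :
    StrictMono fun t => p * exp (k * t) + q := fun _ _ h => by
  dsimp only
  gcongr

lemma tendsto_mul_exp_add_atTop {p k : ℝ} (hp : 0 < p) (hk : 0 < k) (q : ℝ) :
    Tendsto (fun t => p * exp (k * t) + q) atTop atTop :=
  ((tendsto_exp_atTop.comp (tendsto_id.const_mul_atTop hk)).const_mul_atTop hp).atTop_add
    tendsto_const_nhds

lemma StrictMonoOn.const_div_of_neg {g : ℝ → ℝ} {s : Set ℝ} (hg : StrictMonoOn g s)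
    (hpos : ∀ x ∈ s, 0 < g x) {c : ℝ} (hc : c < 0) : StrictMonoOn (fun x => c / g x) s :=
  fun x hx _ hy hxy => by
    simpa [neg_div] using div_lt_div_of_pos_left (neg_pos.2 hc) (hpos x hx) (hg hx hy hxy)

lemma StrictMonoOn.const_div_of_pos {g : ℝ → ℝ} {s : Set ℝ} (hg : StrictMonoOn g s)
    (hpos : ∀ x ∈ s, 0 < g x) {c : ℝ} (hc : 0 < c) : StrictAntiOn (fun x => c / g x) s :=
  fun x hx _ hy hxy => div_lt_div_of_pos_left hc (hpos x hx) (hg hx hy hxy)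

theorem stmt_8 (m s : ℝ) (hm : 0 < m) (hs : 0 < s)
    (S : ℝ → ℝ)
    (hS : ∀ t : ℝ, S t =
      m * (m * Real.sinh (m * t) + s * Real.cosh (m * t)) /
        (m * Real.cosh (m * t) + s * Real.sinh (m * t))) :
    Filter.Tendsto S Filter.atTop (nhds m) ∧
    (s < m → StrictMonoOn S (Set.Ici (0 : ℝ))) ∧
    (m < s → StrictAntiOn S (Set.Ici (0 : ℝ))) ∧
    (s = m → ∀ t : ℝ, 0 ≤ t → S t = m) := by
  set g : ℝ → ℝ := fun t => (m + s) * exp (2 * m * t) + (m - s)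
  have hg_mono : StrictMono g := strictMono_mul_exp_add (by positivity) (by positivity) _
  have hg_pos : ∀ t ∈ Ici (0 : ℝ), 0 < g t := fun t ht =>
    calc 0 < g 0 := by simp only [g, mul_zero, exp_zero]; linarith
      _ ≤ g t := hg_mono.monotone ht
  have hS_eq : EqOn (fun t => m + 2 * m * (s - m) / g t) S (Ici 0) := fun t ht => by
    have hratio := mul_sinh_add_mul_cosh_div_mul_cosh_add_mul_sinh m s (m * t)
      (by rw [← mul_assoc]; exact (hg_pos t ht).ne')
    rw [hS, mul_div_assoc, hratio, ← mul_assoc]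
    ring
  have hg_top : Tendsto g atTop atTop :=
    tendsto_mul_exp_add_atTop (by positivity) (by positivity) _
  refine ⟨?_, fun h => ?_, fun h => ?_, fun h t ht => ?_⟩
  · have hlim : Tendsto (fun t => m + 2 * m * (s - m) / g t) atTop (𝓝 m) := by
      simpa using tendsto_const_nhds.add (tendsto_const_nhds.div_atTop hg_top)
    exact hlim.congr' ((eventually_ge_atTop 0).mono fun t ht => hS_eq ht)
  · exact ((hg_mono.strictMonoOn _).const_div_of_neg hg_pos
      (mul_neg_of_pos_of_neg (by positivity) (sub_neg.2 h))).const_add m |>.congr hS_eq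
  · exact ((hg_mono.strictMonoOn _).const_div_of_pos hg_pos
      (mul_pos (by positivity) (sub_pos.2 h))).const_add m |>.congr hS_eq
  · rw [← hS_eq ht, h]
    simp
end
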